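/- arXiv:0906.4225 — 4 statements merged into one kernel-verified Lean document; each statement's English description precedes it below -/
import Mathlib

section
/- Let A be an associative unital algebra over ℂ, let q ∈ ℂ be nonzero, set δ := q + q^{-1}, and let U_1, U_2, U_3 ∈ A satisfy: U_i² = δ·U_i for i = 1,2,3; U_1 U_3 = U_3 U_1; and U_i U_{i+1} U_i − U_i = U_{i+1} U_i U_{i+1} − U_{i+1} for i = 1,2. With g_i := q^{-1}·1 − U_i, for each σ ∈ S_4 the element g_σ := g_{i_1} g_{i_2} ⋯ g_{i_{ℓ(σ)}}, computed from a reduced expression σ = s_{i_1} ⋯ s_{i_{ℓ(σ)}} in the adjacent transpositions s_1, s_2, s_3, is independent of the choice of reduced expression, and the q-antisymmetrizer Σ_{σ ∈ S_4} (−q)^{ℓ(σ)} g_σ vanishes if and only if (U_1 − U_3 U_2 U_1 + U_2)(U_2 U_3 U_2 − U_2) = 0 (the SU(3) condition defining the A_2-Temperley–Lieb quotient of the Hecke algebra). -/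
/-- The Coxeter length of a permutation `σ` with respect to the generating family `s`:
the minimal length of a word in the generators whose product is `σ`. -/
noncomputable def coxLen (s : Fin 3 → Equiv.Perm (Fin 4)) (σ : Equiv.Perm (Fin 4)) : ℕ :=
  sInf {n | ∃ ω : List (Fin 3), ω.length = n ∧ (ω.map s).prod = σ}

/-- The standard Coxeter generators of `S₄`. -/
def sgen : Fin 3 → Equiv.Perm (Fin 4) := fun i => Equiv.swap i.castSucc i.succ

/-- Number of inversions of a permutation of `Fin 4`. -/
def inv4 (σ : Equiv.Perm (Fin 4)) : ℕ :=
  (Finset.univ.filter (fun p : Fin 4 × Fin 4 => p.1 < p.2 ∧ σ p.2 < σ p.1)).card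

def Cw : Fin 4 → List (Fin 3) := ![[], [0], [1,0], [2,1,0]]
def Dw : Fin 3 → List (Fin 3) := ![[], [1], [2,1]]
def Ew : Fin 2 → List (Fin 3) := ![[], [2]]

/-- Normal-form word indexed by coset data. -/
def wd (k : Fin 4) (j : Fin 3) (r : Fin 2) : List (Fin 3) := Cw k ++ Dw j ++ Ew r

/-- The permutation of the normal-form word. -/
def pf (k : Fin 4) (j : Fin 3) (r : Fin 2) : Equiv.Perm (Fin 4) := ((wd k j r).map sgen).prod

/-- The canonical reduced word of a permutation. -/
def nf (σ : Equiv.Perm (Fin 4)) : List (Fin 3) :=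
  let k := σ 0
  let τ := (pf k 0 0)⁻¹ * σ
  let j : Fin 3 := if τ 1 = 1 then 0 else if τ 1 = 2 then 1 else 2
  let ρ := (pf k j 0)⁻¹ * σ
  wd k j (if ρ 2 = 2 then 0 else 1)

theorem pf_surj : ∀ σ : Equiv.Perm (Fin 4), ∃ (k : Fin 4) (j : Fin 3) (r : Fin 2), pf k j r = σ := by
  decide

theorem nf_spec : ∀ σ : Equiv.Perm (Fin 4), ((nf σ).map sgen).prod = σ ∧ (nf σ).length = inv4 σ := by
  decide

theorem step_le : ∀ (i : Fin 3) (σ : Equiv.Perm (Fin 4)), inv4 (sgen i * σ) ≤ inv4 σ + 1 := by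
  decide

theorem pf_bij : Function.Bijective (fun t : Fin 4 × Fin 3 × Fin 2 => pf t.1 t.2.1 t.2.2) := by
  decide

theorem bound4 : ∀ ω : List (Fin 3), inv4 ((ω.map sgen).prod) ≤ ω.length := by
  intro ω
  induction ω with
  | nil => simp only [List.map_nil, List.prod_nil, List.length_nil]; decide
  | cons i t ih =>
    simp only [List.map_cons, List.prod_cons, List.length_cons]
    have := step_le i ((t.map sgen).prod)
    omega

theorem cox_eq (σ : Equiv.Perm (Fin 4)) : coxLen sgen σ = inv4 σ := by
  apply le_antisymm
  · have hmem : inv4 σ ∈ {n | ∃ ω : List (Fin 3), ω.length = n ∧ (ω.map sgen).prod = σ} :=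
      ⟨nf σ, (nf_spec σ).2, (nf_spec σ).1⟩
    exact Nat.sInf_le hmem
  · have hne : {n | ∃ ω : List (Fin 3), ω.length = n ∧ (ω.map sgen).prod = σ}.Nonempty :=
      ⟨(nf σ).length, nf σ, rfl, (nf_spec σ).1⟩
    apply le_csInf hne
    rintro n ⟨ω, hl, hp⟩
    calc inv4 σ = inv4 ((ω.map sgen).prod) := by rw [hp]
      _ ≤ ω.length := bound4 ω
      _ = n := hl

set_option maxHeartbeats 2000000 in
/-- under the Hecke relations H1–H3 for `U₁, U₂, U₃`, the element `g_σ`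
computed from any reduced expression of `σ ∈ S₄` is independent of the chosen reduced
expression, and the q-antisymmetrizer `Σ_σ (−q)^{ℓ(σ)} g_σ` vanishes iff the SU(3)
condition `(U₁ − U₃U₂U₁ + U₂)(U₂U₃U₂ − U₂) = 0` holds. -/
theorem q_antisymmetrizer_S4_vanishes_iff_SU3 {A : Type*} [Ring A] [Algebra ℂ A]
    (q : ℂ) (hq : q ≠ 0) (U₁ U₂ U₃ : A)
    (h1 : U₁ * U₁ = (q + q⁻¹) • U₁)
    (h2 : U₂ * U₂ = (q + q⁻¹) • U₂)
    (h3 : U₃ * U₃ = (q + q⁻¹) • U₃)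
    (hcomm : U₁ * U₃ = U₃ * U₁)
    (hb1 : U₁ * U₂ * U₁ - U₁ = U₂ * U₁ * U₂ - U₂)
    (hb2 : U₂ * U₃ * U₂ - U₂ = U₃ * U₂ * U₃ - U₃)
    (g : Fin 3 → A)
    (hg : g = ![q⁻¹ • (1 : A) - U₁, q⁻¹ • (1 : A) - U₂, q⁻¹ • (1 : A) - U₃])
    (s : Fin 3 → Equiv.Perm (Fin 4))
    (hs : ∀ i : Fin 3, s i = Equiv.swap i.castSucc i.succ) :
    (∀ (σ : Equiv.Perm (Fin 4)) (ω ω' : List (Fin 3)),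
        (ω.map s).prod = σ → (ω'.map s).prod = σ →
        ω.length = coxLen s σ → ω'.length = coxLen s σ →
        (ω.map g).prod = (ω'.map g).prod) ∧
    (∀ G : Equiv.Perm (Fin 4) → A,
        (∀ σ, ∃ ω : List (Fin 3), (ω.map s).prod = σ ∧ ω.length = coxLen s σ ∧
            G σ = (ω.map g).prod) →
        ((∑ σ : Equiv.Perm (Fin 4), (-q) ^ coxLen s σ • G σ = 0) ↔
          (U₁ - U₃ * U₂ * U₁ + U₂) * (U₂ * U₃ * U₂ - U₂) = 0)) := by
  have hs' : s = sgen := funext fun i => by rw [hs i]; rfl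
  subst hs'
  have ha : g 0 = q⁻¹ • (1 : A) - U₁ := by rw [hg]; rfl
  have hb : g 1 = q⁻¹ • (1 : A) - U₂ := by rw [hg]; rfl
  have hc : g 2 = q⁻¹ • (1 : A) - U₃ := by rw [hg]; rfl
  have e1 : U₁ * (U₂ * U₁) = U₂ * (U₁ * U₂) - U₂ + U₁ := by
    rw [← mul_assoc, ← mul_assoc]; exact sub_eq_iff_eq_add.mp hb1
  have e2 : U₃ * (U₂ * U₃) = U₂ * (U₃ * U₂) - U₂ + U₃ := by
    rw [← mul_assoc, ← mul_assoc]; exact sub_eq_iff_eq_add.mp hb2.symm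
  have hgab : g 0 * (g 1 * g 0) = g 1 * (g 0 * g 1) := by
    rw [ha, hb]
    simp only [mul_sub, sub_mul, smul_mul_assoc, mul_smul_comm, one_mul, mul_one, smul_smul,
      smul_sub, mul_assoc]
    rw [h1, h2, e1]
    match_scalars <;> field_simp <;> ring
  have hgbc : g 1 * (g 2 * g 1) = g 2 * (g 1 * g 2) := by
    rw [hb, hc]
    simp only [mul_sub, sub_mul, smul_mul_assoc, mul_smul_comm, one_mul, mul_one, smul_smul,
      smul_sub, mul_assoc]
    rw [h2, h3, e2]
    match_scalars <;> field_simp <;> ring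
  have hgac : g 2 * g 0 = g 0 * g 2 := by
    rw [ha, hc]
    simp only [mul_sub, sub_mul, smul_mul_assoc, mul_smul_comm, one_mul, mul_one, smul_smul,
      smul_sub]
    rw [hcomm]
    module
  have Lab : ∀ x : A, g 0 * (g 1 * (g 0 * x)) = g 1 * (g 0 * (g 1 * x)) := by
    intro x
    rw [show g 0 * (g 1 * (g 0 * x)) = (g 0 * (g 1 * g 0)) * x from by simp only [mul_assoc], hgab]
    simp only [mul_assoc]
  have Lbc : ∀ x : A, g 1 * (g 2 * (g 1 * x)) = g 2 * (g 1 * (g 2 * x)) := by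
    intro x
    rw [show g 1 * (g 2 * (g 1 * x)) = (g 1 * (g 2 * g 1)) * x from by simp only [mul_assoc], hgbc]
    simp only [mul_assoc]
  have Lac : ∀ x : A, g 2 * (g 0 * x) = g 0 * (g 2 * x) := by
    intro x
    rw [show g 2 * (g 0 * x) = (g 2 * g 0) * x from by simp only [mul_assoc], hgac]
    simp only [mul_assoc]
  have stepE : ∀ (i : Fin 3) (σ : Equiv.Perm (Fin 4)), inv4 (sgen i * σ) = inv4 σ + 1 →
      g i * ((nf σ).map g).prod = ((nf (sgen i * σ)).map g).prod := by
    intro i σ hinc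
    obtain ⟨k, j, r, rfl⟩ := pf_surj σ
    revert hinc
    fin_cases i <;> fin_cases k <;> fin_cases j <;> fin_cases r <;> intro hinc
    · show g 0 * ((nf (pf 0 0 0)).map g).prod = ((nf (sgen 0 * pf 0 0 0)).map g).prod
      rw [show sgen 0 * pf 0 0 0 = pf 1 0 0 from by decide,
          show nf (pf 0 0 0) = ([] : List (Fin 3)) from by decide,
          show nf (pf 1 0 0) = ([0] : List (Fin 3)) from by decide]
      simp only [List.map_cons, List.map_nil, List.prod_cons, List.prod_nil, mul_one]
    · show g 0 * ((nf (pf 0 0 1)).map g).prod = ((nf (sgen 0 * pf 0 0 1)).map g).prod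
      rw [show sgen 0 * pf 0 0 1 = pf 1 0 1 from by decide,
          show nf (pf 0 0 1) = ([2] : List (Fin 3)) from by decide,
          show nf (pf 1 0 1) = ([0, 2] : List (Fin 3)) from by decide]
      simp only [List.map_cons, List.map_nil, List.prod_cons, List.prod_nil, mul_one]
    · show g 0 * ((nf (pf 0 1 0)).map g).prod = ((nf (sgen 0 * pf 0 1 0)).map g).prod
      rw [show sgen 0 * pf 0 1 0 = pf 1 1 0 from by decide,
          show nf (pf 0 1 0) = ([1] : List (Fin 3)) from by decide,
          show nf (pf 1 1 0) = ([0, 1] : List (Fin 3)) from by decide]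
      simp only [List.map_cons, List.map_nil, List.prod_cons, List.prod_nil, mul_one]
    · show g 0 * ((nf (pf 0 1 1)).map g).prod = ((nf (sgen 0 * pf 0 1 1)).map g).prod
      rw [show sgen 0 * pf 0 1 1 = pf 1 1 1 from by decide,
          show nf (pf 0 1 1) = ([1, 2] : List (Fin 3)) from by decide,
          show nf (pf 1 1 1) = ([0, 1, 2] : List (Fin 3)) from by decide]
      simp only [List.map_cons, List.map_nil, List.prod_cons, List.prod_nil, mul_one]
    · show g 0 * ((nf (pf 0 2 0)).map g).prod = ((nf (sgen 0 * pf 0 2 0)).map g).prod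
      rw [show sgen 0 * pf 0 2 0 = pf 1 2 0 from by decide,
          show nf (pf 0 2 0) = ([2, 1] : List (Fin 3)) from by decide,
          show nf (pf 1 2 0) = ([0, 2, 1] : List (Fin 3)) from by decide]
      simp only [List.map_cons, List.map_nil, List.prod_cons, List.prod_nil, mul_one]
    · show g 0 * ((nf (pf 0 2 1)).map g).prod = ((nf (sgen 0 * pf 0 2 1)).map g).prod
      rw [show sgen 0 * pf 0 2 1 = pf 1 2 1 from by decide,
          show nf (pf 0 2 1) = ([2, 1, 2] : List (Fin 3)) from by decide,
          show nf (pf 1 2 1) = ([0, 2, 1, 2] : List (Fin 3)) from by decide]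
      simp only [List.map_cons, List.map_nil, List.prod_cons, List.prod_nil, mul_one]
    · exact absurd hinc (by decide)
    · exact absurd hinc (by decide)
    · exact absurd hinc (by decide)
    · exact absurd hinc (by decide)
    · exact absurd hinc (by decide)
    · exact absurd hinc (by decide)
    · show g 0 * ((nf (pf 2 0 0)).map g).prod = ((nf (sgen 0 * pf 2 0 0)).map g).prod
      rw [show sgen 0 * pf 2 0 0 = pf 2 1 0 from by decide,
          show nf (pf 2 0 0) = ([1, 0] : List (Fin 3)) from by decide,
          show nf (pf 2 1 0) = ([1, 0, 1] : List (Fin 3)) from by decide]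
      simp only [List.map_cons, List.map_nil, List.prod_cons, List.prod_nil, mul_one]
      rw [hgab]
    · show g 0 * ((nf (pf 2 0 1)).map g).prod = ((nf (sgen 0 * pf 2 0 1)).map g).prod
      rw [show sgen 0 * pf 2 0 1 = pf 2 1 1 from by decide,
          show nf (pf 2 0 1) = ([1, 0, 2] : List (Fin 3)) from by decide,
          show nf (pf 2 1 1) = ([1, 0, 1, 2] : List (Fin 3)) from by decide]
      simp only [List.map_cons, List.map_nil, List.prod_cons, List.prod_nil, mul_one]
      rw [Lab (g 2)]
    · exact absurd hinc (by decide)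
    · exact absurd hinc (by decide)
    · show g 0 * ((nf (pf 2 2 0)).map g).prod = ((nf (sgen 0 * pf 2 2 0)).map g).prod
      rw [show sgen 0 * pf 2 2 0 = pf 2 2 1 from by decide,
          show nf (pf 2 2 0) = ([1, 0, 2, 1] : List (Fin 3)) from by decide,
          show nf (pf 2 2 1) = ([1, 0, 2, 1, 2] : List (Fin 3)) from by decide]
      simp only [List.map_cons, List.map_nil, List.prod_cons, List.prod_nil, mul_one]
      rw [Lab (g 2 * (g 1))]
      rw [hgbc]
    · exact absurd hinc (by decide)
    · show g 0 * ((nf (pf 3 0 0)).map g).prod = ((nf (sgen 0 * pf 3 0 0)).map g).prod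
      rw [show sgen 0 * pf 3 0 0 = pf 3 1 0 from by decide,
          show nf (pf 3 0 0) = ([2, 1, 0] : List (Fin 3)) from by decide,
          show nf (pf 3 1 0) = ([2, 1, 0, 1] : List (Fin 3)) from by decide]
      simp only [List.map_cons, List.map_nil, List.prod_cons, List.prod_nil, mul_one]
      rw [← Lac (g 1 * (g 0))]
      rw [hgab]
    · show g 0 * ((nf (pf 3 0 1)).map g).prod = ((nf (sgen 0 * pf 3 0 1)).map g).prod
      rw [show sgen 0 * pf 3 0 1 = pf 3 1 1 from by decide,
          show nf (pf 3 0 1) = ([2, 1, 0, 2] : List (Fin 3)) from by decide,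
          show nf (pf 3 1 1) = ([2, 1, 0, 1, 2] : List (Fin 3)) from by decide]
      simp only [List.map_cons, List.map_nil, List.prod_cons, List.prod_nil, mul_one]
      rw [← Lac (g 1 * (g 0 * (g 2)))]
      rw [Lab (g 2)]
    · exact absurd hinc (by decide)
    · exact absurd hinc (by decide)
    · show g 0 * ((nf (pf 3 2 0)).map g).prod = ((nf (sgen 0 * pf 3 2 0)).map g).prod
      rw [show sgen 0 * pf 3 2 0 = pf 3 2 1 from by decide,
          show nf (pf 3 2 0) = ([2, 1, 0, 2, 1] : List (Fin 3)) from by decide,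
          show nf (pf 3 2 1) = ([2, 1, 0, 2, 1, 2] : List (Fin 3)) from by decide]
      simp only [List.map_cons, List.map_nil, List.prod_cons, List.prod_nil, mul_one]
      rw [← Lac (g 1 * (g 0 * (g 2 * (g 1))))]
      rw [Lab (g 2 * (g 1))]
      rw [hgbc]
    · exact absurd hinc (by decide)
    · show g 1 * ((nf (pf 0 0 0)).map g).prod = ((nf (sgen 1 * pf 0 0 0)).map g).prod
      rw [show sgen 1 * pf 0 0 0 = pf 0 1 0 from by decide,
          show nf (pf 0 0 0) = ([] : List (Fin 3)) from by decide,
          show nf (pf 0 1 0) = ([1] : List (Fin 3)) from by decide]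
      simp only [List.map_cons, List.map_nil, List.prod_cons, List.prod_nil, mul_one]
    · show g 1 * ((nf (pf 0 0 1)).map g).prod = ((nf (sgen 1 * pf 0 0 1)).map g).prod
      rw [show sgen 1 * pf 0 0 1 = pf 0 1 1 from by decide,
          show nf (pf 0 0 1) = ([2] : List (Fin 3)) from by decide,
          show nf (pf 0 1 1) = ([1, 2] : List (Fin 3)) from by decide]
      simp only [List.map_cons, List.map_nil, List.prod_cons, List.prod_nil, mul_one]
    · exact absurd hinc (by decide)
    · exact absurd hinc (by decide)
    · show g 1 * ((nf (pf 0 2 0)).map g).prod = ((nf (sgen 1 * pf 0 2 0)).map g).prod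
      rw [show sgen 1 * pf 0 2 0 = pf 0 2 1 from by decide,
          show nf (pf 0 2 0) = ([2, 1] : List (Fin 3)) from by decide,
          show nf (pf 0 2 1) = ([2, 1, 2] : List (Fin 3)) from by decide]
      simp only [List.map_cons, List.map_nil, List.prod_cons, List.prod_nil, mul_one]
      rw [hgbc]
    · exact absurd hinc (by decide)
    · show g 1 * ((nf (pf 1 0 0)).map g).prod = ((nf (sgen 1 * pf 1 0 0)).map g).prod
      rw [show sgen 1 * pf 1 0 0 = pf 2 0 0 from by decide,
          show nf (pf 1 0 0) = ([0] : List (Fin 3)) from by decide,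
          show nf (pf 2 0 0) = ([1, 0] : List (Fin 3)) from by decide]
      simp only [List.map_cons, List.map_nil, List.prod_cons, List.prod_nil, mul_one]
    · show g 1 * ((nf (pf 1 0 1)).map g).prod = ((nf (sgen 1 * pf 1 0 1)).map g).prod
      rw [show sgen 1 * pf 1 0 1 = pf 2 0 1 from by decide,
          show nf (pf 1 0 1) = ([0, 2] : List (Fin 3)) from by decide,
          show nf (pf 2 0 1) = ([1, 0, 2] : List (Fin 3)) from by decide]
      simp only [List.map_cons, List.map_nil, List.prod_cons, List.prod_nil, mul_one]
    · show g 1 * ((nf (pf 1 1 0)).map g).prod = ((nf (sgen 1 * pf 1 1 0)).map g).prod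
      rw [show sgen 1 * pf 1 1 0 = pf 2 1 0 from by decide,
          show nf (pf 1 1 0) = ([0, 1] : List (Fin 3)) from by decide,
          show nf (pf 2 1 0) = ([1, 0, 1] : List (Fin 3)) from by decide]
      simp only [List.map_cons, List.map_nil, List.prod_cons, List.prod_nil, mul_one]
    · show g 1 * ((nf (pf 1 1 1)).map g).prod = ((nf (sgen 1 * pf 1 1 1)).map g).prod
      rw [show sgen 1 * pf 1 1 1 = pf 2 1 1 from by decide,
          show nf (pf 1 1 1) = ([0, 1, 2] : List (Fin 3)) from by decide,
          show nf (pf 2 1 1) = ([1, 0, 1, 2] : List (Fin 3)) from by decide]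
      simp only [List.map_cons, List.map_nil, List.prod_cons, List.prod_nil, mul_one]
    · show g 1 * ((nf (pf 1 2 0)).map g).prod = ((nf (sgen 1 * pf 1 2 0)).map g).prod
      rw [show sgen 1 * pf 1 2 0 = pf 2 2 0 from by decide,
          show nf (pf 1 2 0) = ([0, 2, 1] : List (Fin 3)) from by decide,
          show nf (pf 2 2 0) = ([1, 0, 2, 1] : List (Fin 3)) from by decide]
      simp only [List.map_cons, List.map_nil, List.prod_cons, List.prod_nil, mul_one]
    · show g 1 * ((nf (pf 1 2 1)).map g).prod = ((nf (sgen 1 * pf 1 2 1)).map g).prod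
      rw [show sgen 1 * pf 1 2 1 = pf 2 2 1 from by decide,
          show nf (pf 1 2 1) = ([0, 2, 1, 2] : List (Fin 3)) from by decide,
          show nf (pf 2 2 1) = ([1, 0, 2, 1, 2] : List (Fin 3)) from by decide]
      simp only [List.map_cons, List.map_nil, List.prod_cons, List.prod_nil, mul_one]
    · exact absurd hinc (by decide)
    · exact absurd hinc (by decide)
    · exact absurd hinc (by decide)
    · exact absurd hinc (by decide)
    · exact absurd hinc (by decide)
    · exact absurd hinc (by decide)
    · show g 1 * ((nf (pf 3 0 0)).map g).prod = ((nf (sgen 1 * pf 3 0 0)).map g).prod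
      rw [show sgen 1 * pf 3 0 0 = pf 3 0 1 from by decide,
          show nf (pf 3 0 0) = ([2, 1, 0] : List (Fin 3)) from by decide,
          show nf (pf 3 0 1) = ([2, 1, 0, 2] : List (Fin 3)) from by decide]
      simp only [List.map_cons, List.map_nil, List.prod_cons, List.prod_nil, mul_one]
      rw [Lbc (g 0)]
      rw [hgac]
    · exact absurd hinc (by decide)
    · show g 1 * ((nf (pf 3 1 0)).map g).prod = ((nf (sgen 1 * pf 3 1 0)).map g).prod
      rw [show sgen 1 * pf 3 1 0 = pf 3 2 0 from by decide,
          show nf (pf 3 1 0) = ([2, 1, 0, 1] : List (Fin 3)) from by decide,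
          show nf (pf 3 2 0) = ([2, 1, 0, 2, 1] : List (Fin 3)) from by decide]
      simp only [List.map_cons, List.map_nil, List.prod_cons, List.prod_nil, mul_one]
      rw [Lbc (g 0 * (g 1))]
      rw [Lac (g 1)]
    · show g 1 * ((nf (pf 3 1 1)).map g).prod = ((nf (sgen 1 * pf 3 1 1)).map g).prod
      rw [show sgen 1 * pf 3 1 1 = pf 3 2 1 from by decide,
          show nf (pf 3 1 1) = ([2, 1, 0, 1, 2] : List (Fin 3)) from by decide,
          show nf (pf 3 2 1) = ([2, 1, 0, 2, 1, 2] : List (Fin 3)) from by decide]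
      simp only [List.map_cons, List.map_nil, List.prod_cons, List.prod_nil, mul_one]
      rw [Lbc (g 0 * (g 1 * (g 2)))]
      rw [Lac (g 1 * (g 2))]
    · exact absurd hinc (by decide)
    · exact absurd hinc (by decide)
    · show g 2 * ((nf (pf 0 0 0)).map g).prod = ((nf (sgen 2 * pf 0 0 0)).map g).prod
      rw [show sgen 2 * pf 0 0 0 = pf 0 0 1 from by decide,
          show nf (pf 0 0 0) = ([] : List (Fin 3)) from by decide,
          show nf (pf 0 0 1) = ([2] : List (Fin 3)) from by decide]
      simp only [List.map_cons, List.map_nil, List.prod_cons, List.prod_nil, mul_one]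
    · exact absurd hinc (by decide)
    · show g 2 * ((nf (pf 0 1 0)).map g).prod = ((nf (sgen 2 * pf 0 1 0)).map g).prod
      rw [show sgen 2 * pf 0 1 0 = pf 0 2 0 from by decide,
          show nf (pf 0 1 0) = ([1] : List (Fin 3)) from by decide,
          show nf (pf 0 2 0) = ([2, 1] : List (Fin 3)) from by decide]
      simp only [List.map_cons, List.map_nil, List.prod_cons, List.prod_nil, mul_one]
    · show g 2 * ((nf (pf 0 1 1)).map g).prod = ((nf (sgen 2 * pf 0 1 1)).map g).prod
      rw [show sgen 2 * pf 0 1 1 = pf 0 2 1 from by decide,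
          show nf (pf 0 1 1) = ([1, 2] : List (Fin 3)) from by decide,
          show nf (pf 0 2 1) = ([2, 1, 2] : List (Fin 3)) from by decide]
      simp only [List.map_cons, List.map_nil, List.prod_cons, List.prod_nil, mul_one]
    · exact absurd hinc (by decide)
    · exact absurd hinc (by decide)
    · show g 2 * ((nf (pf 1 0 0)).map g).prod = ((nf (sgen 2 * pf 1 0 0)).map g).prod
      rw [show sgen 2 * pf 1 0 0 = pf 1 0 1 from by decide,
          show nf (pf 1 0 0) = ([0] : List (Fin 3)) from by decide,
          show nf (pf 1 0 1) = ([0, 2] : List (Fin 3)) from by decide]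
      simp only [List.map_cons, List.map_nil, List.prod_cons, List.prod_nil, mul_one]
      rw [hgac]
    · exact absurd hinc (by decide)
    · show g 2 * ((nf (pf 1 1 0)).map g).prod = ((nf (sgen 2 * pf 1 1 0)).map g).prod
      rw [show sgen 2 * pf 1 1 0 = pf 1 2 0 from by decide,
          show nf (pf 1 1 0) = ([0, 1] : List (Fin 3)) from by decide,
          show nf (pf 1 2 0) = ([0, 2, 1] : List (Fin 3)) from by decide]
      simp only [List.map_cons, List.map_nil, List.prod_cons, List.prod_nil, mul_one]
      rw [Lac (g 1)]
    · show g 2 * ((nf (pf 1 1 1)).map g).prod = ((nf (sgen 2 * pf 1 1 1)).map g).prod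
      rw [show sgen 2 * pf 1 1 1 = pf 1 2 1 from by decide,
          show nf (pf 1 1 1) = ([0, 1, 2] : List (Fin 3)) from by decide,
          show nf (pf 1 2 1) = ([0, 2, 1, 2] : List (Fin 3)) from by decide]
      simp only [List.map_cons, List.map_nil, List.prod_cons, List.prod_nil, mul_one]
      rw [Lac (g 1 * (g 2))]
    · exact absurd hinc (by decide)
    · exact absurd hinc (by decide)
    · show g 2 * ((nf (pf 2 0 0)).map g).prod = ((nf (sgen 2 * pf 2 0 0)).map g).prod
      rw [show sgen 2 * pf 2 0 0 = pf 3 0 0 from by decide,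
          show nf (pf 2 0 0) = ([1, 0] : List (Fin 3)) from by decide,
          show nf (pf 3 0 0) = ([2, 1, 0] : List (Fin 3)) from by decide]
      simp only [List.map_cons, List.map_nil, List.prod_cons, List.prod_nil, mul_one]
    · show g 2 * ((nf (pf 2 0 1)).map g).prod = ((nf (sgen 2 * pf 2 0 1)).map g).prod
      rw [show sgen 2 * pf 2 0 1 = pf 3 0 1 from by decide,
          show nf (pf 2 0 1) = ([1, 0, 2] : List (Fin 3)) from by decide,
          show nf (pf 3 0 1) = ([2, 1, 0, 2] : List (Fin 3)) from by decide]
      simp only [List.map_cons, List.map_nil, List.prod_cons, List.prod_nil, mul_one]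
    · show g 2 * ((nf (pf 2 1 0)).map g).prod = ((nf (sgen 2 * pf 2 1 0)).map g).prod
      rw [show sgen 2 * pf 2 1 0 = pf 3 1 0 from by decide,
          show nf (pf 2 1 0) = ([1, 0, 1] : List (Fin 3)) from by decide,
          show nf (pf 3 1 0) = ([2, 1, 0, 1] : List (Fin 3)) from by decide]
      simp only [List.map_cons, List.map_nil, List.prod_cons, List.prod_nil, mul_one]
    · show g 2 * ((nf (pf 2 1 1)).map g).prod = ((nf (sgen 2 * pf 2 1 1)).map g).prod
      rw [show sgen 2 * pf 2 1 1 = pf 3 1 1 from by decide,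
          show nf (pf 2 1 1) = ([1, 0, 1, 2] : List (Fin 3)) from by decide,
          show nf (pf 3 1 1) = ([2, 1, 0, 1, 2] : List (Fin 3)) from by decide]
      simp only [List.map_cons, List.map_nil, List.prod_cons, List.prod_nil, mul_one]
    · show g 2 * ((nf (pf 2 2 0)).map g).prod = ((nf (sgen 2 * pf 2 2 0)).map g).prod
      rw [show sgen 2 * pf 2 2 0 = pf 3 2 0 from by decide,
          show nf (pf 2 2 0) = ([1, 0, 2, 1] : List (Fin 3)) from by decide,
          show nf (pf 3 2 0) = ([2, 1, 0, 2, 1] : List (Fin 3)) from by decide]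
      simp only [List.map_cons, List.map_nil, List.prod_cons, List.prod_nil, mul_one]
    · show g 2 * ((nf (pf 2 2 1)).map g).prod = ((nf (sgen 2 * pf 2 2 1)).map g).prod
      rw [show sgen 2 * pf 2 2 1 = pf 3 2 1 from by decide,
          show nf (pf 2 2 1) = ([1, 0, 2, 1, 2] : List (Fin 3)) from by decide,
          show nf (pf 3 2 1) = ([2, 1, 0, 2, 1, 2] : List (Fin 3)) from by decide]
      simp only [List.map_cons, List.map_nil, List.prod_cons, List.prod_nil, mul_one]
    · exact absurd hinc (by decide)
    · exact absurd hinc (by decide)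
    · exact absurd hinc (by decide)
    · exact absurd hinc (by decide)
    · exact absurd hinc (by decide)
    · exact absurd hinc (by decide)
  have keyF : ∀ ω : List (Fin 3), ω.length = inv4 ((ω.map sgen).prod) →
      (ω.map g).prod = ((nf ((ω.map sgen).prod)).map g).prod := by
    intro ω
    induction ω with
    | nil =>
      intro _
      rw [show ((([] : List (Fin 3)).map sgen).prod) = 1 from rfl,
        show nf (1 : Equiv.Perm (Fin 4)) = ([] : List (Fin 3)) from by decide]
    | cons i t ih =>
      intro hlen
      simp only [List.map_cons, List.prod_cons, List.length_cons] at hlen ⊢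
      have hle := bound4 t
      have hle2 := step_le i ((t.map sgen).prod)
      have hred : t.length = inv4 ((t.map sgen).prod) := by omega
      have hinc : inv4 (sgen i * (t.map sgen).prod) = inv4 ((t.map sgen).prod) + 1 := by omega
      rw [ih hred, stepE i _ hinc]
  constructor
  · intro σ ω ω' hw hw' hl hl'
    rw [cox_eq σ] at hl hl'
    have k1 := keyF ω (by rw [hw]; exact hl)
    have k2 := keyF ω' (by rw [hw']; exact hl')
    rw [k1, k2, hw, hw']
  · intro G hG
    have hGF : ∀ σ, G σ = ((nf σ).map g).prod := by
      intro σ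
      obtain ⟨ω, hw1, hw2, hw3⟩ := hG σ
      rw [cox_eq σ] at hw2
      rw [hw3, keyF ω (by rw [hw1]; exact hw2), hw1]
    have hsum : (∑ σ : Equiv.Perm (Fin 4), (-q) ^ coxLen sgen σ • G σ)
        = ∑ t : Fin 4 × Fin 3 × Fin 2,
            (-q) ^ inv4 (pf t.1 t.2.1 t.2.2) • ((nf (pf t.1 t.2.1 t.2.2)).map g).prod := by
      refine (Fintype.sum_bijective _ pf_bij _ _ ?_).symm
      intro t
      rw [cox_eq, hGF]
    rw [hsum]
    have main : (∑ t : Fin 4 × Fin 3 × Fin 2,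
            (-q) ^ inv4 (pf t.1 t.2.1 t.2.2) • ((nf (pf t.1 t.2.1 t.2.2)).map g).prod)
        = (-(q^6)) • ((U₁ - U₃ * U₂ * U₁ + U₂) * (U₂ * U₃ * U₂ - U₂)) := by
      simp only [Fintype.sum_prod_type, Fin.sum_univ_four, Fin.sum_univ_three, Fin.sum_univ_two]
      simp only [show inv4 (pf 0 0 0) = 0 from by decide,
        show nf (pf 0 0 0) = ([] : List (Fin 3)) from by decide,
        show inv4 (pf 0 0 1) = 1 from by decide,
        show nf (pf 0 0 1) = ([2] : List (Fin 3)) from by decide,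
        show inv4 (pf 0 1 0) = 1 from by decide,
        show nf (pf 0 1 0) = ([1] : List (Fin 3)) from by decide,
        show inv4 (pf 0 1 1) = 2 from by decide,
        show nf (pf 0 1 1) = ([1, 2] : List (Fin 3)) from by decide,
        show inv4 (pf 0 2 0) = 2 from by decide,
        show nf (pf 0 2 0) = ([2, 1] : List (Fin 3)) from by decide,
        show inv4 (pf 0 2 1) = 3 from by decide,
        show nf (pf 0 2 1) = ([2, 1, 2] : List (Fin 3)) from by decide,
        show inv4 (pf 1 0 0) = 1 from by decide,
        show nf (pf 1 0 0) = ([0] : List (Fin 3)) from by decide,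
        show inv4 (pf 1 0 1) = 2 from by decide,
        show nf (pf 1 0 1) = ([0, 2] : List (Fin 3)) from by decide,
        show inv4 (pf 1 1 0) = 2 from by decide,
        show nf (pf 1 1 0) = ([0, 1] : List (Fin 3)) from by decide,
        show inv4 (pf 1 1 1) = 3 from by decide,
        show nf (pf 1 1 1) = ([0, 1, 2] : List (Fin 3)) from by decide,
        show inv4 (pf 1 2 0) = 3 from by decide,
        show nf (pf 1 2 0) = ([0, 2, 1] : List (Fin 3)) from by decide,
        show inv4 (pf 1 2 1) = 4 from by decide,
        show nf (pf 1 2 1) = ([0, 2, 1, 2] : List (Fin 3)) from by decide,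
        show inv4 (pf 2 0 0) = 2 from by decide,
        show nf (pf 2 0 0) = ([1, 0] : List (Fin 3)) from by decide,
        show inv4 (pf 2 0 1) = 3 from by decide,
        show nf (pf 2 0 1) = ([1, 0, 2] : List (Fin 3)) from by decide,
        show inv4 (pf 2 1 0) = 3 from by decide,
        show nf (pf 2 1 0) = ([1, 0, 1] : List (Fin 3)) from by decide,
        show inv4 (pf 2 1 1) = 4 from by decide,
        show nf (pf 2 1 1) = ([1, 0, 1, 2] : List (Fin 3)) from by decide,
        show inv4 (pf 2 2 0) = 4 from by decide,
        show nf (pf 2 2 0) = ([1, 0, 2, 1] : List (Fin 3)) from by decide,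
        show inv4 (pf 2 2 1) = 5 from by decide,
        show nf (pf 2 2 1) = ([1, 0, 2, 1, 2] : List (Fin 3)) from by decide,
        show inv4 (pf 3 0 0) = 3 from by decide,
        show nf (pf 3 0 0) = ([2, 1, 0] : List (Fin 3)) from by decide,
        show inv4 (pf 3 0 1) = 4 from by decide,
        show nf (pf 3 0 1) = ([2, 1, 0, 2] : List (Fin 3)) from by decide,
        show inv4 (pf 3 1 0) = 4 from by decide,
        show nf (pf 3 1 0) = ([2, 1, 0, 1] : List (Fin 3)) from by decide,
        show inv4 (pf 3 1 1) = 5 from by decide,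
        show nf (pf 3 1 1) = ([2, 1, 0, 1, 2] : List (Fin 3)) from by decide,
        show inv4 (pf 3 2 0) = 5 from by decide,
        show nf (pf 3 2 0) = ([2, 1, 0, 2, 1] : List (Fin 3)) from by decide,
        show inv4 (pf 3 2 1) = 6 from by decide,
        show nf (pf 3 2 1) = ([2, 1, 0, 2, 1, 2] : List (Fin 3)) from by decide]
      simp only [List.map_cons, List.map_nil, List.prod_cons, List.prod_nil, mul_one]
      trans ((1 - q • g 0 + q^2 • (g 1 * g 0) - q^3 • (g 2 * (g 1 * g 0))) *
          ((1 - q • g 1 + q^2 • (g 2 * g 1)) * (1 - q • g 2)))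
      · simp only [mul_sub, sub_mul, mul_add, add_mul, mul_one, one_mul, smul_mul_assoc,
          mul_smul_comm, smul_smul, mul_assoc]
        match_scalars <;> ring_nf
      · rw [ha, hb, hc]
        trans ((q•U₁ + q•U₃ - (q^2)•(U₃*U₁) - (q^2)•(U₃*U₂) + (q^3)•(U₃*(U₂*U₁))) *
            ((q^3) • (U₂*(U₃*U₂) - U₂)))
        · congr 1
          · simp only [mul_sub, sub_mul, mul_add, add_mul, smul_mul_assoc, mul_smul_comm,
              one_mul, mul_one, smul_smul, smul_sub, mul_assoc]
            match_scalars <;> field_simp <;> ring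
          · simp only [mul_sub, sub_mul, mul_add, add_mul, smul_mul_assoc, mul_smul_comm,
              one_mul, mul_one, smul_smul, smul_sub, mul_assoc]
            rw [h3, e2]
            match_scalars <;> field_simp <;> ring
        · have hY2 : U₂ * (U₂ * (U₃ * U₂) - U₂) = (q + q⁻¹) • (U₂ * (U₃ * U₂) - U₂) := by
            rw [mul_sub, show U₂ * (U₂ * (U₃ * U₂)) = (U₂ * U₂) * (U₃ * U₂) from by
              simp only [mul_assoc], h2]
            simp only [smul_mul_assoc]
            module
          have hY3 : U₃ * (U₂ * (U₃ * U₂) - U₂) = (q + q⁻¹) • (U₂ * (U₃ * U₂) - U₂) := by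
            rw [mul_sub, show U₃ * (U₂ * (U₃ * U₂)) = (U₃ * (U₂ * U₃)) * U₂ from by
              simp only [mul_assoc], e2]
            simp only [sub_mul, add_mul, mul_assoc]
            rw [h2]
            simp only [mul_smul_comm]
            module
          have hcomm' : ∀ x : A, U₃ * (U₁ * x) = U₁ * (U₃ * x) := fun x => by
            rw [← mul_assoc, ← hcomm, mul_assoc]
          have final : ∀ Y : A, U₂ * Y = (q + q⁻¹) • Y → U₃ * Y = (q + q⁻¹) • Y →
              (q•U₁ + q•U₃ - (q^2)•(U₃*U₁) - (q^2)•(U₃*U₂) + (q^3)•(U₃*(U₂*U₁))) * ((q^3) • Y)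
              = -(q^6) • ((U₁ - U₃ * (U₂ * U₁) + U₂) * Y) := by
            intro Y hY2' hY3'
            simp only [add_mul, sub_mul, smul_mul_assoc, mul_smul_comm, smul_smul, mul_assoc]
            rw [hcomm' Y]
            simp only [hY2', hY3', mul_smul_comm, smul_smul]
            match_scalars <;> field_simp <;> ring
          rw [show (U₁ - U₃ * U₂ * U₁ + U₂) * (U₂ * U₃ * U₂ - U₂)
              = (U₁ - U₃ * (U₂ * U₁) + U₂) * (U₂ * (U₃ * U₂) - U₂) from by
            simp only [mul_assoc]]
          exact final _ hY2 hY3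
    rw [main]
    have hc6 : (-(q^6)) ≠ 0 := by simpa using pow_ne_zero 6 hq
    constructor
    · intro h0
      have h7 := congrArg (fun z : A => (-(q^6))⁻¹ • z) h0
      simpa only [smul_smul, inv_mul_cancel₀ hc6, one_smul, smul_zero] using h7
    · intro h0
      rw [h0, smul_zero]
end

section
/- Let R be a commutative ring, V a finite index type, and A, B, C square matrices over V with entries in R satisfying Bᵀ = B, Aᵀ·A = B·B, C·Cᵀ = B·B, and A·Aᵀ = Cᵀ·C. For r ∈ ℕ let D_r be A, B or C according as r ≡ 0, 1 or 2 (mod 3), and for i, j ∈ ℕ set Λ_{i,j} := (D_0 · D_1 ⋯ D_{j−1}) · P_{i,j}, where P_{i,j} is the product of i alternating factors D_j, D_jᵀ, D_j, D_jᵀ, …, beginning with D_j. Then Λ_{i,j} · (Λ_{i,j})ᵀ = (A·Aᵀ)^{i+j}. -/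
open Matrix

private lemma aux_conj {R V : Type*} [CommRing R] [Fintype V] [DecidableEq V]
    (X : Matrix V V R) (n : ℕ) :
    X * (Xᵀ * X) ^ n * Xᵀ = (X * Xᵀ) ^ (n + 1) := by
  induction n with
  | zero => simp [pow_succ]
  | succ n ih =>
    have : X * (Xᵀ * X) ^ (n + 1) * Xᵀ = (X * (Xᵀ * X) ^ n * Xᵀ) * (X * Xᵀ) := by
      rw [pow_succ]; simp only [mul_assoc]
    rw [this, ih, ← pow_succ]

private lemma aux_alt_even {R V : Type*} [CommRing R] [Fintype V] [DecidableEq V]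
    (X : Matrix V V R) (k : ℕ) :
    ((List.range (2 * k)).map (fun m => if m % 2 = 0 then X else Xᵀ)).prod
      = (X * Xᵀ) ^ k ∧
    ((List.range (2 * k + 1)).map (fun m => if m % 2 = 0 then X else Xᵀ)).prod
      = (X * Xᵀ) ^ k * X := by
  induction k with
  | zero => refine ⟨by simp, ?_⟩; simp [List.range_succ]
  | succ k ih =>
    obtain ⟨ih1, ih2⟩ := ih
    have ho : (2 * k + 1) % 2 = 1 := by omega
    have h2 : 2 * (k + 1) = (2 * k + 1) + 1 := by ring
    have hprod : ((List.range (2 * (k + 1))).map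
        (fun m => if m % 2 = 0 then X else Xᵀ)).prod = (X * Xᵀ) ^ (k + 1) := by
      rw [h2, List.range_succ, List.map_append, List.prod_append, ih2]
      simp [ho, pow_succ, mul_assoc]
    refine ⟨hprod, ?_⟩
    rw [List.range_succ, List.map_append, List.prod_append, hprod]
    have h3 : (2 * (k + 1)) % 2 = 0 := by omega
    simp [h3]

private lemma aux_alt {R V : Type*} [CommRing R] [Fintype V] [DecidableEq V]
    (X : Matrix V V R) (i : ℕ) :
    ((List.range i).map (fun m => if m % 2 = 0 then X else Xᵀ)).prod *
      (((List.range i).map (fun m => if m % 2 = 0 then X else Xᵀ)).prod)ᵀ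
      = (X * Xᵀ) ^ i := by
  have hsym : ∀ k : ℕ, ((X * Xᵀ) ^ k)ᵀ = (X * Xᵀ) ^ k := by
    intro k; rw [transpose_pow, transpose_mul, transpose_transpose]
  rcases Nat.even_or_odd i with ⟨k, hk⟩ | ⟨k, hk⟩
  · have hk' : i = 2 * k := by omega
    rw [hk', (aux_alt_even X k).1, hsym, ← pow_add]
    congr 1; omega
  · rw [hk, (aux_alt_even X k).2, transpose_mul, hsym]
    have : (X * Xᵀ) ^ k * X * (Xᵀ * (X * Xᵀ) ^ k)
        = (X * Xᵀ) ^ k * (X * Xᵀ) * (X * Xᵀ) ^ k := by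
      simp only [mul_assoc]
    rw [this, ← pow_succ, ← pow_add]
    congr 1; omega

/-- with `D_r` cycling through `A, B, C` according to `r mod 3`, and
`Λ_{i,j} = (D_0 ⋯ D_{j−1}) · (D_j D_jᵀ D_j ⋯)` (`i` alternating factors starting with `D_j`),
the relations `Bᵀ = B`, `AᵀA = B²`, `CCᵀ = B²`, `AAᵀ = CᵀC` give
`Λ_{i,j} Λ_{i,j}ᵀ = (AAᵀ)^{i+j}`. -/
theorem lambda_mul_transpose_eq_pow {R V : Type*} [CommRing R] [Fintype V] [DecidableEq V]
    (A B C : Matrix V V R)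
    (hB : Bᵀ = B) (h1 : Aᵀ * A = B * B) (h2 : C * Cᵀ = B * B) (h3 : A * Aᵀ = Cᵀ * C)
    (D : ℕ → Matrix V V R)
    (hD : ∀ r, D r = if r % 3 = 0 then A else if r % 3 = 1 then B else C)
    (Λ : ℕ → ℕ → Matrix V V R)
    (hΛ : ∀ i j, Λ i j =
      ((List.range j).map D).prod *
        ((List.range i).map (fun k => if k % 2 = 0 then D j else (D j)ᵀ)).prod)
    (i j : ℕ) :
    Λ i j * (Λ i j)ᵀ = (A * Aᵀ) ^ (i + j) := by
  have hD0 : D 0 = A := by rw [hD]; norm_num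
  have step : ∀ j : ℕ, D (j + 1) * (D (j + 1))ᵀ = (D j)ᵀ * D j := by
    intro j
    have h : j % 3 = 0 ∨ j % 3 = 1 ∨ j % 3 = 2 := by omega
    rcases h with h | h | h
    · have h' : (j + 1) % 3 = 1 := by omega
      rw [hD, hD, h, h']
      simp only [if_true, if_false]
      norm_num
      rw [hB]; exact h1.symm
    · have h' : (j + 1) % 3 = 2 := by omega
      rw [hD, hD, h, h']
      norm_num
      rw [hB]; exact h2
    · have h' : (j + 1) % 3 = 0 := by omega
      rw [hD, hD, h, h']
      norm_num
      exact h3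
  have main : ∀ (j n : ℕ),
      ((List.range j).map D).prod * (D j * (D j)ᵀ) ^ n * (((List.range j).map D).prod)ᵀ
        = (A * Aᵀ) ^ (n + j) := by
    intro j
    induction j with
    | zero => intro n; simp [hD0]
    | succ j ih =>
      intro n
      rw [List.range_succ, List.map_append, List.prod_append]
      simp only [List.map_cons, List.map_nil, List.prod_cons, List.prod_nil, mul_one]
      rw [step j, transpose_mul]
      set M := ((List.range j).map D).prod with hM
      have hrw : M * D j * ((D j)ᵀ * D j) ^ n * ((D j)ᵀ * Mᵀ)
          = M * (D j * ((D j)ᵀ * D j) ^ n * (D j)ᵀ) * Mᵀ := by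
        simp only [mul_assoc]
      rw [hrw, aux_conj, ih (n + 1)]
      congr 1; omega
  rw [hΛ i j, transpose_mul]
  set M := ((List.range j).map D).prod with hM
  set P := ((List.range i).map (fun k => if k % 2 = 0 then D j else (D j)ᵀ)).prod with hP
  have hrw : M * P * (Pᵀ * Mᵀ) = M * (P * Pᵀ) * Mᵀ := by
    simp only [mul_assoc]
  rw [hrw, hP, aux_alt (D j) i, main j i]
end

section
/- Let R be a commutative ring, V a finite index type, and A, B, C square matrices over V with entries in R satisfying Bᵀ = B, Aᵀ·A = B·B, C·Cᵀ = B·B, and A·Aᵀ = Cᵀ·C. For r ∈ ℕ let D_r be A, B or C according as r ≡ 0, 1 or 2 (mod 3), and for i, j ∈ ℕ set Λ_{i,j} := (D_0 · D_1 ⋯ D_{j−1}) · P_{i,j}, where P_{i,j} is the product of i alternating factors D_j, D_jᵀ, D_j, D_jᵀ, …, beginning with D_j. Then for all i, j ∈ ℕ and every integer k with −i ≤ k ≤ j one has Λ_{i+k, j−k} · (Λ_{i+k, j−k})ᵀ = Λ_{i,j} · (Λ_{i,j})ᵀ; in particular every diagonal entry agrees, so dim(B_{i,j}) = dim(B_{i+k,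 j−k}) for the associated double sequence (B_{i,j}). -/
open Matrix

section Aux

variable {R V : Type*} [CommRing R] [Fintype V] [DecidableEq V]

private def altProd (M : Matrix V V R) (i : ℕ) : Matrix V V R :=
  ((List.range i).map (fun k => if k % 2 = 0 then M else Mᵀ)).prod

private lemma altProd_closed (M : Matrix V V R) (i : ℕ) :
    altProd M i = (M * Mᵀ) ^ (i / 2) * (if i % 2 = 0 then 1 else M) := by
  induction i with
  | zero => simp [altProd]
  | succ n ih =>
    have h : altProd M (n + 1) = altProd M n * (if n % 2 = 0 then M else Mᵀ) := by
      simp [altProd, List.range_succ]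
    rcases Nat.even_or_odd n with he | ho
    · have h0 : n % 2 = 0 := Nat.even_iff.mp he
      have hx1 : (n + 1) % 2 = 1 := by omega
      have hx2 : (n + 1) / 2 = n / 2 := by omega
      rw [h, ih, h0]
      simp [hx1, hx2, Matrix.mul_assoc]
    · have h0 : n % 2 = 1 := Nat.odd_iff.mp ho
      have hx1 : (n + 1) % 2 = 0 := by omega
      have hx2 : (n + 1) / 2 = n / 2 + 1 := by omega
      rw [h, ih]
      simp [h0, hx1, hx2, pow_succ, Matrix.mul_assoc]

private lemma altProd_mul_transpose (M : Matrix V V R) (i : ℕ) :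
    altProd M i * (altProd M i)ᵀ = (M * Mᵀ) ^ i := by
  have hs : ((M * Mᵀ) ^ (i / 2))ᵀ = (M * Mᵀ) ^ (i / 2) := by
    rw [transpose_pow, transpose_mul, transpose_transpose]
  rw [altProd_closed]
  rcases Nat.even_or_odd i with he | ho
  · have h0 : i % 2 = 0 := Nat.even_iff.mp he
    have hi : i / 2 + i / 2 = i := by omega
    rw [if_pos h0, Matrix.mul_one, hs, ← pow_add, hi]
  · have h0 : i % 2 = 1 := Nat.odd_iff.mp ho
    have hi : (i / 2 + 1) + i / 2 = i := by omega
    rw [if_neg (by omega : ¬ i % 2 = 0), transpose_mul, hs]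
    have : (M * Mᵀ) ^ (i / 2) * M * (Mᵀ * (M * Mᵀ) ^ (i / 2)) =
        ((M * Mᵀ) ^ (i / 2) * (M * Mᵀ)) * (M * Mᵀ) ^ (i / 2) := by
      simp [Matrix.mul_assoc]
    rw [this, ← pow_succ, ← pow_add, hi]

private lemma sandwich (X : Matrix V V R) (i : ℕ) :
    X * (Xᵀ * X) ^ i * Xᵀ = (X * Xᵀ) ^ (i + 1) := by
  induction i with
  | zero => simp [pow_succ]
  | succ n ih =>
    rw [pow_succ]
    have : X * ((Xᵀ * X) ^ n * (Xᵀ * X)) * Xᵀ =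
        (X * (Xᵀ * X) ^ n * Xᵀ) * (X * Xᵀ) := by
      simp [Matrix.mul_assoc]
    rw [this, ih, ← pow_succ]

end Aux

/-- with `D_r` cycling through `A, B, C` according to `r mod 3`, and
`Λ_{i,j} = (D_0 ⋯ D_{j−1}) · (D_j D_jᵀ D_j ⋯)` (`i` alternating factors starting with `D_j`),
the product `Λ_{i,j} Λ_{i,j}ᵀ` is constant along anti-diagonals: for `−i ≤ k ≤ j`,
`Λ_{i+k,j−k} Λ_{i+k,j−k}ᵀ = Λ_{i,j} Λ_{i,j}ᵀ`; in particular all diagonal entries agree,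
so `dim B_{i,j} = dim B_{i+k,j−k}`. -/
theorem lambda_mul_transpose_antidiagonal_constant {R V : Type*}
    [CommRing R] [Fintype V] [DecidableEq V]
    (A B C : Matrix V V R)
    (hB : Bᵀ = B) (h1 : Aᵀ * A = B * B) (h2 : C * Cᵀ = B * B) (h3 : A * Aᵀ = Cᵀ * C)
    (D : ℕ → Matrix V V R)
    (hD : ∀ r, D r = if r % 3 = 0 then A else if r % 3 = 1 then B else C)
    (Λ : ℕ → ℕ → Matrix V V R)
    (hΛ : ∀ i j, Λ i j =
      ((List.range j).map D).prod *
        ((List.range i).map (fun k => if k % 2 = 0 then D j else (D j)ᵀ)).prod)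
    (i j : ℕ) (k : ℤ) (hk1 : -(i : ℤ) ≤ k) (hk2 : k ≤ (j : ℤ)) :
    Λ ((i : ℤ) + k).toNat ((j : ℤ) - k).toNat *
        (Λ ((i : ℤ) + k).toNat ((j : ℤ) - k).toNat)ᵀ = Λ i j * (Λ i j)ᵀ ∧
    ∀ v : V,
      (Λ ((i : ℤ) + k).toNat ((j : ℤ) - k).toNat *
        (Λ ((i : ℤ) + k).toNat ((j : ℤ) - k).toNat)ᵀ) v v = (Λ i j * (Λ i j)ᵀ) v v := by
  set P : ℕ → Matrix V V R := fun j => ((List.range j).map D).prod with hPdef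
  have key : ∀ j, (D j)ᵀ * D j = D (j + 1) * (D (j + 1))ᵀ := by
    intro j
    have h3' : j % 3 = 0 ∨ j % 3 = 1 ∨ j % 3 = 2 := by omega
    rcases h3' with h | h | h
    · have h' : (j + 1) % 3 = 1 := by omega
      rw [hD j, hD (j + 1), if_pos h, if_neg (by omega), if_pos h']
      rw [hB]; exact h1
    · have h' : (j + 1) % 3 = 2 := by omega
      rw [hD j, hD (j + 1), if_neg (by omega), if_pos h, if_neg (by omega), if_neg (by omega)]
      rw [hB]; exact h2.symm
    · have h' : (j + 1) % 3 = 0 := by omega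
      rw [hD j, hD (j + 1), if_neg (by omega), if_neg (by omega), if_pos h']
      exact h3.symm
  have hF : ∀ i j, Λ i j * (Λ i j)ᵀ = P j * (D j * (D j)ᵀ) ^ i * (P j)ᵀ := by
    intro i j
    have : Λ i j = P j * altProd (D j) i := by rw [hΛ]; rfl
    rw [this, transpose_mul]
    calc P j * altProd (D j) i * ((altProd (D j) i)ᵀ * (P j)ᵀ)
        = P j * (altProd (D j) i * (altProd (D j) i)ᵀ) * (P j)ᵀ := by
          simp [Matrix.mul_assoc]
      _ = P j * (D j * (D j)ᵀ) ^ i * (P j)ᵀ := by rw [altProd_mul_transpose]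
  have hP : ∀ j, P (j + 1) = P j * D j := by
    intro j; simp [hPdef, List.range_succ]
  have step : ∀ i j, Λ i (j + 1) * (Λ i (j + 1))ᵀ = Λ (i + 1) j * (Λ (i + 1) j)ᵀ := by
    intro i j
    rw [hF, hF, hP j, ← key j, transpose_mul]
    have hs := sandwich (D j) i
    calc P j * D j * ((D j)ᵀ * D j) ^ i * ((D j)ᵀ * (P j)ᵀ)
        = P j * (D j * ((D j)ᵀ * D j) ^ i * (D j)ᵀ) * (P j)ᵀ := by
          simp [Matrix.mul_assoc]
      _ = P j * (D j * (D j)ᵀ) ^ (i + 1) * (P j)ᵀ := by rw [hs]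
  have diag : ∀ j i, Λ i j * (Λ i j)ᵀ = Λ (i + j) 0 * (Λ (i + j) 0)ᵀ := by
    intro j
    induction j with
    | zero => intro i; rfl
    | succ n ih =>
      intro i
      rw [step i n, ih (i + 1), show i + 1 + n = i + (n + 1) by omega]
  have hmn : ((i : ℤ) + k).toNat + ((j : ℤ) - k).toNat = i + j := by omega
  have main : Λ ((i : ℤ) + k).toNat ((j : ℤ) - k).toNat *
      (Λ ((i : ℤ) + k).toNat ((j : ℤ) - k).toNat)ᵀ = Λ i j * (Λ i j)ᵀ := by
    rw [diag, diag j i, hmn]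
  exact ⟨main, fun v => by rw [main]⟩
end

section
/- Let V and E be finite types with source and range maps s, r : E → V and an involution γ ↦ γ̃ on E satisfying s(γ̃) = r(γ) and r(γ̃) = s(γ), let φ : V → ℝ be strictly positive, and fix a base vertex * ∈ V. For m ≥ 0 let Path_m denote the set of sequences (γ_1, …, γ_m) of edges with s(γ_1) = * and s(γ_{k+1}) = r(γ_k). For 1 ≤ i ≤ m+1 define the cup matrix M_{∪^{(i)}}, with rows indexed by Path_m and columns by Path_{m+2}, by (M_{∪^{(i)}})_{α,β} = √(φ(r(β_i))/φ(s(β_i))) if β_k = α_k for k < i, β_{i+1} = β̃_i, and β_{k+2} = α_k for k ≥ i, and 0 otherwise; set M_{∩^{(i)}} := (M_{∪^{(i)}})ᵀ. Then the cup–cap (zig-zag) simplifications hold: M_{∪^{(i+1)}} · M_{∩^{(i)}} = 1 and M_{∪^{(i)}} · M_{∩^{(i+1)}} = 1, the identity matrix on Path_m. -/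
/-!
Both products are supported on the graph of the zig-zag map `α ↦ (α₁, …, αᵢ, α̃ᵢ, αᵢ, αᵢ₊₁, …)`:
a path that is a cup at `i + 1` over `α` and a cup at `i` over `α'` must be this zig-zag of `α`
(this is where `γ̃̃ = γ` enters), and deleting the cup at `i` from it recovers `α' = α`. On the
zig-zag the two weights are `√(φ(r αᵢ)/φ(s αᵢ))` and `√(φ(s αᵢ)/φ(r αᵢ))`, whose product is `1`.
The second identity is the transpose of the first.
-/

open Matrix

/-- Paths of length `n` on a graph with edge set `E`, source/range maps `s, r`,
starting at the base vertex `v₀`. -/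
abbrev GraphPath {V E : Type*} (s r : E → V) (v₀ : V) (n : ℕ) : Type _ :=
  {γ : Fin n → E //
    (∀ hn : 0 < n, s (γ ⟨0, hn⟩) = v₀) ∧
    ∀ (k : ℕ) (hk : k + 1 < n), s (γ ⟨k + 1, hk⟩) = r (γ ⟨k, Nat.lt_of_succ_lt hk⟩)}

theorem Matrix.mul_transpose_eq_one_of_support {ι κ R : Type*} [Fintype κ] [DecidableEq ι]
    [NonAssocSemiring R] (A B : Matrix ι κ R) (f : ι → κ)
    (hsupp : ∀ α α' β, A α β * B α' β ≠ 0 → α = α' ∧ β = f α)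
    (hdiag : ∀ α, A α (f α) * B α (f α) = 1) : A * Bᵀ = 1 := by
  ext α α'
  simp only [mul_apply, transpose_apply, one_apply]
  split_ifs with h
  · subst h
    rw [Finset.sum_eq_single (f α) (fun β _ hβ => not_not.1 fun hne => hβ (hsupp α α β hne).2)
      (by simp), hdiag]
  · exact Finset.sum_eq_zero fun β _ => not_not.1 fun hne => h (hsupp α α' β hne).1

section CupInsertion

variable {V E : Type*} {rev : E → E} {m i : ℕ}

/-- Indices are 0-based: `β` is `α` with a pair `(b, rev b)` inserted at positions `i - 1, i`. -/
def IsCupAt (rev : E → E) (i : ℕ) (hi : i ≤ m + 1) (α : Fin m → E) (β : Fin (m + 2) → E) :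
    Prop :=
  (∀ k : Fin m, (k : ℕ) + 1 < i → β (Fin.castLE (Nat.le_add_right m 2) k) = α k) ∧
  β ⟨i, Nat.lt_succ_of_le hi⟩ = rev (β ⟨i - 1, (i.sub_le 1).trans_lt (Nat.lt_succ_of_le hi)⟩) ∧
  (∀ k : Fin m, i ≤ (k : ℕ) + 1 → β ⟨(k : ℕ) + 2, Nat.add_lt_add_right k.2 2⟩ = α k)

theorem IsCupAt.left_unique {hi : i ≤ m + 1} {α α' : Fin m → E} {β : Fin (m + 2) → E}
    (h : IsCupAt rev i hi α β) (h' : IsCupAt rev i hi α' β) : α = α' := by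
  funext k
  by_cases hk : (k : ℕ) + 1 < i
  · rw [← h.1 k hk, h'.1 k hk]
  · rw [← h.2.2 k (by omega), h'.2.2 k (by omega)]

/-- `(a₀, …, a_{i-1}, rev a_{i-1}, a_{i-1}, aᵢ, …)`; the last case includes position `i + 1`. -/
def insertBacktrack (rev : E → E) (hi1 : 1 ≤ i) (hi2 : i ≤ m) (a : Fin m → E)
    (k : Fin (m + 2)) : E :=
  if _ : (k : ℕ) < i then a ⟨k, by omega⟩
  else if _ : (k : ℕ) = i then rev (a ⟨i - 1, by omega⟩)
  else a ⟨k - 2, by omega⟩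

section
variable (hi1 : 1 ≤ i) (hi2 : i ≤ m) (a : Fin m → E)

theorem insertBacktrack_of_lt (k : ℕ) (hk : k < i) :
    insertBacktrack rev hi1 hi2 a ⟨k, by omega⟩ = a ⟨k, by omega⟩ := by
  simp [insertBacktrack, hk]

theorem insertBacktrack_self :
    insertBacktrack rev hi1 hi2 a ⟨i, by omega⟩ = rev (a ⟨i - 1, by omega⟩) := by
  simp [insertBacktrack]

theorem insertBacktrack_of_gt (k : ℕ) (hk : i < k) (hkm : k < m + 2) :
    insertBacktrack rev hi1 hi2 a ⟨k, hkm⟩ = a ⟨k - 2, by omega⟩ := by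
  simp [insertBacktrack, show ¬ k < i by omega, show k ≠ i by omega]

theorem isCupAt_insertBacktrack :
    IsCupAt rev i (by omega) a (insertBacktrack rev hi1 hi2 a) := by
  refine ⟨fun k hk => insertBacktrack_of_lt hi1 hi2 a k (by omega), ?_, fun k hk => ?_⟩
  · rw [insertBacktrack_self, insertBacktrack_of_lt hi1 hi2 a (i - 1) (by omega)]
  · rw [insertBacktrack_of_gt hi1 hi2 a (k + 2) (by omega)]
    rfl

theorem isCupAt_succ_insertBacktrack (hrev : Function.Involutive rev) :
    IsCupAt rev (i + 1) (by omega) a (insertBacktrack rev hi1 hi2 a) := by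
  refine ⟨fun k hk => insertBacktrack_of_lt hi1 hi2 a k (by omega), ?_, fun k hk => ?_⟩
  · simp only [insertBacktrack_of_gt hi1 hi2 a (i + 1) (by omega), Nat.add_sub_cancel,
      insertBacktrack_self, hrev _]
    congr 1
  · rw [insertBacktrack_of_gt hi1 hi2 a (k + 2) (by omega)]
    rfl

theorem IsCupAt.eq_insertBacktrack (hrev : Function.Involutive rev) {α' : Fin m → E}
    {β : Fin (m + 2) → E} (h : IsCupAt rev (i + 1) (by omega) a β)
    (h' : IsCupAt rev i (by omega) α' β) : β = insertBacktrack rev hi1 hi2 a := by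
  have hprev : β ⟨i - 1, by omega⟩ = a ⟨i - 1, by omega⟩ :=
    h.1 ⟨i - 1, by omega⟩ (show i - 1 + 1 < i + 1 by omega)
  funext ⟨k, hk⟩
  rcases lt_trichotomy k i with hlt | rfl | hgt
  · rw [insertBacktrack_of_lt hi1 hi2 a k hlt]
    exact h.1 ⟨k, by omega⟩ (show k + 1 < i + 1 by omega)
  · rw [insertBacktrack_self, h'.2.1, hprev]
  · rw [insertBacktrack_of_gt hi1 hi2 a k hgt]
    obtain rfl | hgt' : k = i + 1 ∨ i + 1 < k := by omega
    · simp only [h.2.1, Nat.add_sub_cancel, h'.2.1, hrev _, hprev]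
      congr 1
    · rw [← h.2.2 ⟨k - 2, by omega⟩ (show i + 1 ≤ k - 2 + 1 by omega)]
      exact congrArg β (Fin.ext (show k = k - 2 + 2 by omega))

end

def GraphPath.insertBacktrack {s r : E → V} {v₀ : V} (hsrev : ∀ e, s (rev e) = r e)
    (hrrev : ∀ e, r (rev e) = s e) (hi1 : 1 ≤ i) (hi2 : i ≤ m) (α : GraphPath s r v₀ m) :
    GraphPath s r v₀ (m + 2) := by
  refine ⟨_root_.insertBacktrack rev hi1 hi2 α.1, fun _ => ?_, fun k hk => ?_⟩
  · rw [insertBacktrack_of_lt hi1 hi2 α.1 0 (by omega)]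
    exact α.2.1 (by omega)
  rcases lt_trichotomy (k + 1) i with hlt | rfl | hgt
  · rw [insertBacktrack_of_lt hi1 hi2 α.1 (k + 1) hlt,
      insertBacktrack_of_lt hi1 hi2 α.1 k (by omega)]
    exact α.2.2 k (by omega)
  · rw [insertBacktrack_self, insertBacktrack_of_lt hi1 hi2 α.1 k (by omega), hsrev]
    rfl
  obtain rfl | hgt' : k = i ∨ i < k := by omega
  · rw [insertBacktrack_of_gt hi1 hi2 α.1 (k + 1) (by omega), insertBacktrack_self, hrrev]
    congr 2
  · rw [insertBacktrack_of_gt hi1 hi2 α.1 (k + 1) (by omega),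
      insertBacktrack_of_gt hi1 hi2 α.1 k hgt']
    convert α.2.2 (k - 2) (by omega) using 3
    simp only [Fin.mk.injEq]
    omega

@[simp]
theorem GraphPath.insertBacktrack_val {s r : E → V} {v₀ : V} (hsrev : ∀ e, s (rev e) = r e)
    (hrrev : ∀ e, r (rev e) = s e) (hi1 : 1 ≤ i) (hi2 : i ≤ m) (α : GraphPath s r v₀ m) :
    (GraphPath.insertBacktrack hsrev hrrev hi1 hi2 α).1 = _root_.insertBacktrack rev hi1 hi2 α.1 :=
  rfl

end CupInsertion


/-- the cup matrices `M_{∪^{(i)}}` (with caps `M_{∩^{(i)}} = M_{∪^{(i)}}ᵀ`)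
satisfy the cup–cap (zig-zag) simplifications
`M_{∪^{(i+1)}} · M_{∩^{(i)}} = 1` and `M_{∪^{(i)}} · M_{∩^{(i+1)}} = 1`. -/
theorem cup_cap_simplification {V E : Type*}
    (s r : E → V) (rev : E → E)
    (hrev : ∀ γ, rev (rev γ) = γ)
    (hsrev : ∀ γ, s (rev γ) = r γ) (hrrev : ∀ γ, r (rev γ) = s γ)
    (φ : V → ℝ) (hφ : ∀ v, 0 < φ v) (v₀ : V) (m : ℕ)
    [Fintype (GraphPath s r v₀ m)] [Fintype (GraphPath s r v₀ (m + 2))]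
    [DecidableEq (GraphPath s r v₀ m)]
    (Mcup : ℕ → Matrix (GraphPath s r v₀ m) (GraphPath s r v₀ (m + 2)) ℝ)
    (hM : ∀ (i : ℕ) (hi1 : 1 ≤ i) (hi2 : i ≤ m + 1)
        (α : GraphPath s r v₀ m) (β : GraphPath s r v₀ (m + 2)),
      (((∀ k : Fin m, (k : ℕ) + 1 < i → β.1 (Fin.castLE (by omega) k) = α.1 k) ∧
        β.1 ⟨i, by omega⟩ = rev (β.1 ⟨i - 1, by omega⟩) ∧
        (∀ k : Fin m, i ≤ (k : ℕ) + 1 → β.1 ⟨(k : ℕ) + 2, by omega⟩ = α.1 k)) →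
          Mcup i α β =
            Real.sqrt (φ (r (β.1 ⟨i - 1, by omega⟩)) / φ (s (β.1 ⟨i - 1, by omega⟩)))) ∧
      (¬ ((∀ k : Fin m, (k : ℕ) + 1 < i → β.1 (Fin.castLE (by omega) k) = α.1 k) ∧
          β.1 ⟨i, by omega⟩ = rev (β.1 ⟨i - 1, by omega⟩) ∧
          (∀ k : Fin m, i ≤ (k : ℕ) + 1 → β.1 ⟨(k : ℕ) + 2, by omega⟩ = α.1 k)) →
            Mcup i α β = 0)) :
    ∀ (i : ℕ), 1 ≤ i → i ≤ m →
      Mcup (i + 1) * (Mcup i)ᵀ = 1 ∧ Mcup i * (Mcup (i + 1))ᵀ = 1 := by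
  intro i hi1 hi2
  have isCupAt_of_ne_zero : ∀ j (hj1 : 1 ≤ j) (hj2 : j ≤ m + 1) α β,
      Mcup j α β ≠ 0 → IsCupAt rev j hj2 α.1 β.1 :=
    fun j hj1 hj2 α β h => not_not.1 (mt (hM j hj1 hj2 α β).2 h)
  let zigzag : GraphPath s r v₀ m → GraphPath s r v₀ (m + 2) :=
    GraphPath.insertBacktrack hsrev hrrev hi1 hi2
  have hsupp : ∀ α α' β, Mcup (i + 1) α β * Mcup i α' β ≠ 0 → α = α' ∧ β = zigzag α := by
    intro α α' β h
    obtain ⟨hβ, hβ'⟩ := mul_ne_zero_iff.1 h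
    have hcup := isCupAt_of_ne_zero (i + 1) (by omega) (by omega) α β hβ
    have hcup' := isCupAt_of_ne_zero i hi1 (by omega) α' β hβ'
    obtain rfl : β = zigzag α :=
      Subtype.ext (hcup.eq_insertBacktrack hi1 hi2 α.1 hrev hcup')
    exact ⟨Subtype.ext ((isCupAt_insertBacktrack hi1 hi2 α.1).left_unique hcup'), rfl⟩
  have hdiag : ∀ α, Mcup (i + 1) α (zigzag α) * Mcup i α (zigzag α) = 1 := by
    intro α
    rw [(hM (i + 1) (by omega) (by omega) α (zigzag α)).1
        (isCupAt_succ_insertBacktrack hi1 hi2 α.1 hrev),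
      (hM i hi1 (by omega) α (zigzag α)).1 (isCupAt_insertBacktrack hi1 hi2 α.1)]
    simp only [zigzag, GraphPath.insertBacktrack_val, Nat.add_sub_cancel, insertBacktrack_self,
      insertBacktrack_of_lt hi1 hi2 α.1 (i - 1) (by omega), hsrev, hrrev]
    rw [← inv_div, Real.sqrt_inv, inv_mul_cancel₀ (Real.sqrt_pos.2 (div_pos (hφ _) (hφ _))).ne']
  have h := mul_transpose_eq_one_of_support _ _ _ hsupp hdiag
  exact ⟨h, by simpa using congrArg transpose h⟩
end
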